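/- arXiv:1507.04065 — 2 statements merged into one kernel-verified Lean document; each statement's English description precedes it below -/
import Mathlib

section
/- For every μ ∈ ℝ, c ∈ ℝ and σ > 0, the integral P(μ, σ, c) = ∫_c^∞ (1 - exp(-(2/σ²)(μ - c)(q - c))) · φ((q - μ)/σ) / σ dq equals 2·Φ((μ - c)/σ) - 1, i.e. it equals ∫_{c-μ}^{μ-c} φ(x/σ)/σ dx. -/
open Real MeasureTheory Filter Topology
open Set

/-- Standard normal density φ(x) = exp(-x²/2)/√(2π). -/
noncomputable def stdPdf (x : ℝ) : ℝ := Real.exp (-(x ^ 2) / 2) / Real.sqrt (2 * Real.pi)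

/-- Standard normal CDF Φ(x) = ∫_{-∞}^x φ(u) du. -/
noncomputable def stdCdf (x : ℝ) : ℝ := ∫ u in Set.Iio x, stdPdf u

lemma stdPdf_eq (x : ℝ) : stdPdf x = (Real.sqrt (2*Real.pi))⁻¹ * Real.exp (-(1/2) * x ^ 2) := by
  rw [stdPdf]; ring_nf

lemma integrable_stdPdf : Integrable stdPdf := by
  have : stdPdf = fun x => (Real.sqrt (2*Real.pi))⁻¹ * Real.exp (-(1/2) * x ^ 2) :=
    funext stdPdf_eq
  rw [this]
  exact (integrable_exp_neg_mul_sq (by norm_num)).const_mul _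

lemma integral_stdPdf : ∫ x, stdPdf x = 1 := by
  simp only [stdPdf_eq]
  rw [MeasureTheory.integral_const_mul, integral_gaussian]
  rw [inv_mul_eq_one₀]
  · rw [show (π/(1/2):ℝ) = 2*π by ring]
  · positivity

lemma integral_Ioi_stdPdf (t : ℝ) : ∫ x in Ioi t, stdPdf x = 1 - stdCdf t := by
  have h := intervalIntegral.integral_Iic_add_Ioi (b := t) (μ := volume)
    integrable_stdPdf.integrableOn integrable_stdPdf.integrableOn
  rw [integral_stdPdf] at h
  rw [stdCdf, ← integral_Iic_eq_integral_Iio]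
  linarith

lemma stdCdf_neg (x : ℝ) : stdCdf (-x) = 1 - stdCdf x := by
  have h1 : ∫ u in Ioi x, stdPdf (-u) = ∫ u in Iic (-x), stdPdf u :=
    integral_comp_neg_Ioi x stdPdf
  have h2 : ∀ u : ℝ, stdPdf (-u) = stdPdf u := by
    intro u; simp [stdPdf]
  simp_rw [h2] at h1
  rw [stdCdf, ← integral_Iic_eq_integral_Iio, ← h1, integral_Ioi_stdPdf]

lemma integral_comp_add_right_Ioi (f : ℝ → ℝ) (c a : ℝ) :
    ∫ x in Ioi c, f (x + a) = ∫ x in Ioi (c + a), f x := by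
  have A : MeasurableEmbedding fun x : ℝ => x + a :=
    (Homeomorph.addRight a).isClosedEmbedding.measurableEmbedding
  have := A.setIntegral_map (μ := volume) f (Ioi (c + a))
  rw [(measurePreserving_add_right volume a).map_eq] at this
  rw [this]
  congr 1
  ext x
  simp [lt_sub_iff_add_lt]

lemma integrable_stdPdf_shift {σ : ℝ} (hσ : 0 < σ) (a : ℝ) :
    Integrable (fun q : ℝ => stdPdf ((q - a) / σ)) :=
  (integrable_stdPdf.comp_div hσ.ne').comp_sub_right a

lemma integral_Ioi_stdPdf_shift {σ : ℝ} (hσ : 0 < σ) (a c : ℝ) :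
    ∫ q in Ioi c, stdPdf ((q - a) / σ) / σ = 1 - stdCdf ((c - a) / σ) := by
  have h1 : ∫ q in Ioi c, stdPdf ((q - a) / σ) / σ
      = σ⁻¹ * ∫ q in Ioi c, stdPdf ((q - a) / σ) := by
    rw [← integral_const_mul]
    congr 1; ext q; ring
  have h2 : ∫ q in Ioi c, stdPdf ((q - a) / σ)
      = ∫ q in Ioi (c + -a), stdPdf (q / σ) := by
    simpa [sub_eq_add_neg] using
      integral_comp_add_right_Ioi (fun x => stdPdf (x / σ)) c (-a)
  have h3 : ∫ q in Ioi (c - a), stdPdf (σ⁻¹ * q)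
      = (σ⁻¹)⁻¹ • ∫ q in Ioi (σ⁻¹ * (c - a)), stdPdf q :=
    integral_comp_mul_left_Ioi stdPdf _ (inv_pos.mpr hσ)
  rw [h1, h2]
  simp_rw [div_eq_inv_mul, ← sub_eq_add_neg] at *
  rw [h3, integral_Ioi_stdPdf, smul_eq_mul, inv_inv]
  field_simp

lemma pointwise_key {σ : ℝ} (hσ : 0 < σ) (μ c q : ℝ) :
    (1 - Real.exp (-(2 / σ ^ 2) * (μ - c) * (q - c))) * stdPdf ((q - μ) / σ) / σ
      = stdPdf ((q - μ) / σ) / σ - stdPdf ((q - (2 * c - μ)) / σ) / σ := by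
  have hσ2 : σ ^ 2 ≠ 0 := pow_ne_zero 2 hσ.ne'
  have key : Real.exp (-(2 / σ ^ 2) * (μ - c) * (q - c)) * stdPdf ((q - μ) / σ)
      = stdPdf ((q - (2 * c - μ)) / σ) := by
    rw [stdPdf, stdPdf, ← mul_div_assoc, ← Real.exp_add]
    congr 2
    field_simp
    ring
  rw [sub_mul, one_mul, key]
  ring


/-- P(μ, σ, c): probability that an agent with prior N(μ, σ²) and link cost c
is never ostracized (Proposition 1). -/
noncomputable def Pstay (μ σ c : ℝ) : ℝ :=
  ∫ q in Set.Ioi c, (1 - Real.exp (-(2 / σ ^ 2) * (μ - c) * (q - c))) * stdPdf ((q - μ) / σ) / σ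

lemma Pstay_eq (μ c σ : ℝ) (hσ : 0 < σ) :
    Pstay μ σ c = stdCdf ((μ - c) / σ) - stdCdf ((c - μ) / σ) := by
  rw [Pstay, setIntegral_congr_fun measurableSet_Ioi
    (fun q _ => pointwise_key hσ μ c q),
    integral_sub ((integrable_stdPdf_shift hσ μ).div_const σ).integrableOn
      ((integrable_stdPdf_shift hσ (2 * c - μ)).div_const σ).integrableOn,
    integral_Ioi_stdPdf_shift hσ μ c, integral_Ioi_stdPdf_shift hσ (2 * c - μ) c,
    show c - (2 * c - μ) = μ - c by ring]
  ring

/-- the inclusion probability equals 2·Φ((μ-c)/σ) - 1, i.e. it equals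
∫_{c-μ}^{μ-c} φ(x/σ)/σ dx. -/
theorem stmt_0 (μ c σ : ℝ) (hσ : 0 < σ) :
    Pstay μ σ c = 2 * stdCdf ((μ - c) / σ) - 1 ∧
    Pstay μ σ c = ∫ x in (c - μ)..(μ - c), stdPdf (x / σ) / σ := by
  have hneg : (c - μ) / σ = -((μ - c) / σ) := by ring
  constructor
  · rw [Pstay_eq μ c σ hσ, hneg, stdCdf_neg]
    ring
  · have h1 : ∫ x in (c - μ)..(μ - c), stdPdf (x / σ) / σ
        = (∫ x in (c - μ)..(μ - c), stdPdf (x / σ)) / σ := by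
      rw [intervalIntegral.integral_div]
    have h2 := intervalIntegral.integral_comp_div (a := c - μ) (b := μ - c)
      (fun x => stdPdf x) hσ.ne'
    have h3 : ∫ x in ((c - μ) / σ)..((μ - c) / σ), stdPdf x
        = stdCdf ((μ - c) / σ) - stdCdf ((c - μ) / σ) := by
      rw [← intervalIntegral.integral_Iic_sub_Iic
        integrable_stdPdf.integrableOn integrable_stdPdf.integrableOn,
        integral_Iic_eq_integral_Iio, integral_Iic_eq_integral_Iio]
      rfl
    rw [Pstay_eq μ c σ hσ, h1, h2, h3, smul_eq_mul]
    field_simp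
end

section
/- Fix μ ∈ ℝ, σ > 0 and c ∈ ℝ. Then the quantity (μ - (1 - P(μ, σ, c - δ))·(c - δ)) / P(μ, σ, c - δ), which is the conditional expectation of the agent's quality given that its reputation never hits the subsidized threshold c - δ, tends to μ as δ tends to +∞. -/
open Real MeasureTheory Filter Topology

/-
By the reflection principle, `1 - P(μ, σ, t)` is the mass of `N(μ, σ²)` below `t` plus the mass of
the mirrored Gaussian `N(2t - μ, σ²)` above `t`. A Gaussian density with mean `m` is at most
`C · exp (-|x - m|)`, so both masses are `O(exp (t - μ))`. Hence, as `t = c - δ → -∞`, both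
`1 - P` and `(1 - P) · t` tend to `0`, and the conditional mean `(μ - (1 - P) · t) / P` tends to `μ`.
-/

open ProbabilityTheory NNReal

lemma gaussianPDFReal_le_exp_neg_abs (m : ℝ) (v : ℝ≥0) (x : ℝ) :
    gaussianPDFReal m v x ≤ (√(2 * π * v))⁻¹ * exp (v / 2) * exp (-|x - m|) := by
  rcases eq_or_ne v 0 with rfl | hv
  · simp
  rw [gaussianPDFReal, mul_assoc _ (exp _), ← exp_add]
  gcongr
  rw [div_le_iff₀ (by positivity)]
  nlinarith [sq_nonneg (|x - m| - v), sq_abs (x - m)]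

lemma setIntegral_Iic_gaussianPDFReal_le (m : ℝ) (v : ℝ≥0) (t : ℝ) :
    ∫ x in Set.Iic t, gaussianPDFReal m v x ≤ (√(2 * π * v))⁻¹ * exp (v / 2) * exp (t - m) := by
  set C := (√(2 * π * v))⁻¹ * exp (v / 2)
  calc ∫ x in Set.Iic t, gaussianPDFReal m v x
      ≤ ∫ x in Set.Iic t, C * exp (-m) * exp x := by
        refine setIntegral_mono (integrable_gaussianPDFReal m v).integrableOn
          ((integrableOn_exp_Iic t).const_mul _) fun x => ?_
        rw [mul_assoc, ← exp_add]
        refine (gaussianPDFReal_le_exp_neg_abs m v x).trans ?_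
        gcongr
        linarith [neg_abs_le (x - m)]
    _ = C * exp (t - m) := by
        rw [integral_const_mul, integral_exp_Iic, mul_assoc, ← exp_add, neg_add_eq_sub]

lemma setIntegral_Ioi_gaussianPDFReal_le (m : ℝ) (v : ℝ≥0) (t : ℝ) :
    ∫ x in Set.Ioi t, gaussianPDFReal m v x ≤ (√(2 * π * v))⁻¹ * exp (v / 2) * exp (m - t) := by
  set C := (√(2 * π * v))⁻¹ * exp (v / 2)
  have hint : IntegrableOn (fun x => exp (-x)) (Set.Ioi t) := by
    simpa using exp_neg_integrableOn_Ioi t one_pos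
  calc ∫ x in Set.Ioi t, gaussianPDFReal m v x
      ≤ ∫ x in Set.Ioi t, C * exp m * exp (-x) := by
        refine setIntegral_mono (integrable_gaussianPDFReal m v).integrableOn
          (hint.const_mul _) fun x => ?_
        rw [mul_assoc, ← exp_add]
        refine (gaussianPDFReal_le_exp_neg_abs m v x).trans ?_
        gcongr
        linarith [neg_abs_le (m - x), abs_sub_comm x m]
    _ = C * exp (m - t) := by
        rw [integral_const_mul, integral_exp_neg_Ioi, mul_assoc, ← exp_add, ← sub_eq_add_neg]

section Pstay

variable (μ : ℝ) {σ : ℝ} (hσ : 0 < σ)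
include hσ

lemma stdPdf_div_eq_gaussianPDFReal {v : ℝ≥0} (hv : (v : ℝ) = σ ^ 2) (q : ℝ) :
    stdPdf ((q - μ) / σ) / σ = gaussianPDFReal μ v q := by
  unfold stdPdf gaussianPDFReal
  rw [hv, sqrt_mul' _ (sq_nonneg σ), sqrt_sq hσ.le, div_pow]
  field_simp

/-- Reflection principle: killing the `N(μ, σ²)` density at `t` leaves the density minus its mirror
image in `t`. -/
lemma Pstay_integrand_eq {v : ℝ≥0} (hv : (v : ℝ) = σ ^ 2) (t q : ℝ) :
    (1 - exp (-(2 / σ ^ 2) * (μ - t) * (q - t))) * stdPdf ((q - μ) / σ) / σ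
      = gaussianPDFReal μ v q - gaussianPDFReal (2 * t - μ) v q := by
  rw [mul_div_assoc, stdPdf_div_eq_gaussianPDFReal μ hσ hv, sub_mul, one_mul]
  unfold gaussianPDFReal
  rw [mul_left_comm, ← exp_add, hv]
  congr 3
  field_simp
  ring

lemma one_sub_Pstay_eq {v : ℝ≥0} (hv : (v : ℝ) = σ ^ 2) (t : ℝ) :
    1 - Pstay μ σ t = (∫ x in Set.Iic t, gaussianPDFReal μ v x)
      + ∫ x in Set.Ioi t, gaussianPDFReal (2 * t - μ) v x := by
  have htotal := integral_gaussianPDFReal_eq_one μ (v := v)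
    (NNReal.coe_ne_zero.mp (hv ▸ pow_ne_zero 2 hσ.ne'))
  rw [← intervalIntegral.integral_Iic_add_Ioi (integrable_gaussianPDFReal μ v).integrableOn
    (integrable_gaussianPDFReal μ v).integrableOn] at htotal
  rw [Pstay, setIntegral_congr_fun measurableSet_Ioi fun q _ => Pstay_integrand_eq μ hσ hv t q,
    integral_sub (integrable_gaussianPDFReal _ v).integrableOn
      (integrable_gaussianPDFReal _ v).integrableOn]
  linarith

lemma one_sub_Pstay_nonneg (t : ℝ) : 0 ≤ 1 - Pstay μ σ t := by
  rw [one_sub_Pstay_eq μ hσ (v := ⟨σ ^ 2, sq_nonneg σ⟩) rfl]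
  exact add_nonneg (setIntegral_nonneg measurableSet_Iic fun x _ => gaussianPDFReal_nonneg _ _ x)
    (setIntegral_nonneg measurableSet_Ioi fun x _ => gaussianPDFReal_nonneg _ _ x)

lemma one_sub_Pstay_le {v : ℝ≥0} (hv : (v : ℝ) = σ ^ 2) (t : ℝ) :
    1 - Pstay μ σ t ≤ 2 * ((√(2 * π * v))⁻¹ * exp (v / 2)) * exp (t - μ) := by
  have hright := setIntegral_Ioi_gaussianPDFReal_le (2 * t - μ) v t
  rw [show 2 * t - μ - t = t - μ by ring] at hright
  rw [one_sub_Pstay_eq μ hσ hv]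
  exact (add_le_add (setIntegral_Iic_gaussianPDFReal_le μ v t) hright).trans_eq (by ring)

lemma one_sub_Pstay_isBigO_exp : (fun t => 1 - Pstay μ σ t) =O[atBot] exp := by
  set v : ℝ≥0 := ⟨σ ^ 2, sq_nonneg σ⟩
  refine Asymptotics.IsBigO.of_bound (2 * ((√(2 * π * v))⁻¹ * exp (v / 2)) * exp (-μ))
    (Eventually.of_forall fun t => ?_)
  rw [norm_of_nonneg (one_sub_Pstay_nonneg μ hσ t), norm_of_nonneg (exp_pos t).le, mul_assoc,
    ← exp_add, neg_add_eq_sub]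
  exact one_sub_Pstay_le μ hσ rfl t

lemma tendsto_Pstay_conditional_mean_atBot :
    Tendsto (fun t => (μ - (1 - Pstay μ σ t) * t) / Pstay μ σ t) atBot (𝓝 μ) := by
  have hdefect : Tendsto (fun t => 1 - Pstay μ σ t) atBot (𝓝 0) :=
    (one_sub_Pstay_isBigO_exp μ hσ).trans_tendsto tendsto_exp_atBot
  have hmul_exp : Tendsto (fun t : ℝ => exp t * t) atBot (𝓝 0) := by
    have := (tendsto_pow_mul_exp_neg_atTop_nhds_zero 1).neg.comp tendsto_neg_atBot_atTop
    simpa [Function.comp_def, mul_comm] using this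
  have hdefect_mul : Tendsto (fun t => (1 - Pstay μ σ t) * t) atBot (𝓝 0) :=
    ((one_sub_Pstay_isBigO_exp μ hσ).mul (Asymptotics.isBigO_refl _ _)).trans_tendsto hmul_exp
  have hP : Tendsto (fun t => Pstay μ σ t) atBot (𝓝 1) := by
    simpa only [sub_sub_cancel, sub_zero] using hdefect.const_sub 1
  have := (hdefect_mul.const_sub μ).div hP one_ne_zero
  rwa [sub_zero, div_one] at this

end Pstay

/-- the conditional expected quality given never hitting the subsidized
threshold c - δ, namely (μ - (1 - P(μ,σ,c-δ))·(c-δ))/P(μ,σ,c-δ), tends to μ as δ → ∞. -/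
theorem stmt_16 (μ σ c : ℝ) (hσ : 0 < σ) :
    Tendsto (fun δ : ℝ =>
        (μ - (1 - Pstay μ σ (c - δ)) * (c - δ)) / Pstay μ σ (c - δ))
      atTop (𝓝 μ) := by
  have hthreshold : Tendsto (fun δ : ℝ => c - δ) atTop atBot := by
    simpa [sub_eq_add_neg] using tendsto_atBot_add_const_left _ c tendsto_neg_atTop_atBot
  exact (tendsto_Pstay_conditional_mean_atBot μ hσ).comp hthreshold
end
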